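/- arXiv:math/0210223 — 5 statements merged into one kernel-verified Lean document; each statement's English description precedes it below -/
import Mathlib

section
/- Let p be a prime, let K ≥ −1 be an integer, and set e = 1/p^{K+1}. Then for every positive integer i, the rational number e·i + K − τ(i) is nonnegative. -/
/-!
Put `k = K + 1` and `m = i - 1`, so the claim reads `s(m)/(p-1) ≤ k - 1 + (m+1)/p^k` for the
base-`p` digit sum `s`. This holds in every base `b ≥ 2`, by induction on `k`: for `k = 0` it is
`s(m) ≤ m`, and writing `m = b q + r` with `r < b`, so that `s(m) = s(q) + r`, the bound for `q`
at `k` gives the bound for `m` at `k + 1` up to the slack `(b-1-r)(1/(b-1) - 1/b^(k+1)) ≥ 0`.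
-/

/-- `τ̄(n)`: the sum of the base-`p` digits of `n - 1` (so `τ̄(1) = 0`). -/
def taubar (p n : ℕ) : ℕ := (Nat.digits p (n - 1)).sum

/-- `τ(n) = τ̄(n)/(p-1)` as a rational number. -/
def tau (p n : ℕ) : ℚ := (taubar p n : ℚ) / ((p : ℚ) - 1)

theorem Nat.digits_sum_eq_mod_add_digits_sum_div (b m : ℕ) :
    (b.digits m).sum = m % b + (b.digits (m / b)).sum := by
  rcases m.eq_zero_or_pos with rfl | hm
  · simp
  rcases lt_or_ge 1 b with hb | hb
  · rw [Nat.digits_def' hb hm, List.sum_cons]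
  interval_cases b <;> simp [Nat.digits_zero_succ' hm.ne', Nat.mod_one]

theorem Nat.digits_sum_div_sub_one_le (b : ℕ) (hb : 2 ≤ b) (k m : ℕ) :
    ((b.digits m).sum : ℚ) / (b - 1) ≤ k - 1 + (m + 1) / b ^ k := by
  have hb' : (1 : ℚ) ≤ b - 1 := by
    rw [le_sub_iff_add_le]; exact_mod_cast hb
  induction k generalizing m with
  | zero =>
    calc ((b.digits m).sum : ℚ) / (b - 1) ≤ (b.digits m).sum :=
          _root_.div_le_self (Nat.cast_nonneg _) hb'
      _ ≤ m := by exact_mod_cast Nat.digit_sum_le b m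
      _ = _ := by simp
  | succ k ih =>
    set q := m / b
    set r := m % b
    have hm : (m : ℚ) = b * q + r := by exact_mod_cast (Nat.div_add_mod m b).symm
    have hr : (r : ℚ) ≤ b - 1 := by
      rw [le_sub_iff_add_le]; exact_mod_cast Nat.mod_lt m (by omega)
    have hslack : 0 ≤ (b - 1 - r) * (1 / (b - 1) - 1 / (b : ℚ) ^ (k + 1)) := by
      refine mul_nonneg (by linarith) (sub_nonneg.2 ?_)
      gcongr
      calc (b : ℚ) - 1 ≤ b := by linarith
        _ ≤ (b : ℚ) ^ (k + 1) := le_self_pow₀ (by linarith) (by omega)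
    calc ((b.digits m).sum : ℚ) / (b - 1)
        = ((b.digits q).sum : ℚ) / (b - 1) + r / (b - 1) := by
          rw [Nat.digits_sum_eq_mod_add_digits_sum_div, Nat.cast_add, add_div, add_comm]
      _ ≤ k - 1 + (q + 1) / b ^ k + r / (b - 1) := by gcongr; exact ih q
      _ = ((k + 1 : ℕ) : ℚ) - 1 + (m + 1) / b ^ (k + 1)
            - (b - 1 - r) * (1 / (b - 1) - 1 / (b : ℚ) ^ (k + 1)) := by
          have : (b : ℚ) - 1 ≠ 0 := by linarith
          rw [hm]; push_cast; field_simp; ring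
      _ ≤ ((k + 1 : ℕ) : ℚ) - 1 + (m + 1) / b ^ (k + 1) := sub_le_self _ hslack

/-- Lemma 1.7. For `K ≥ -1` and `e = 1/p^(K+1)`, one has
`e·i + K - τ(i) ≥ 0` for every positive integer `i`. -/
theorem tau_le_linear (p : ℕ) (hp : p.Prime) (K : ℤ) (hK : -1 ≤ K)
    (e : ℚ) (he : e = 1 / (p : ℚ) ^ (K + 1)) :
    ∀ i : ℕ, 0 < i → 0 ≤ e * (i : ℚ) + (K : ℚ) - tau p i := by
  intro i hi
  obtain ⟨k, hk⟩ : ∃ k : ℕ, K + 1 = k := ⟨(K + 1).toNat, by omega⟩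
  obtain ⟨m, rfl⟩ : ∃ m, i = m + 1 := ⟨i - 1, by omega⟩
  have hK' : (K : ℚ) = k - 1 := by
    rw [eq_sub_iff_add_eq]; exact_mod_cast hk
  rw [he, hk, zpow_natCast, hK', tau, taubar, Nat.add_sub_cancel, Nat.cast_add_one, sub_nonneg,
    one_div_mul_eq_div, add_comm]
  exact Nat.digits_sum_div_sub_one_le p hp.two_le k m
end

section
/- Let S be a commutative integral domain containing the rational numbers, suppose z = a·x + b·y with a, b, x, y ∈ S, and let n be a positive integer. Suppose a_0 = 1 and a_1, …, a_{k−1} ∈ S have been chosen with k ≤ n so that Σ_{j=0}^i C(n−j, i−j)·a_j·z^{i−j}·x^j ∈ y^i·S for i = 1, …, k−1. Then there exists a_k ∈ S such that Σ_{j=0}^k C(n−j, k−j)·a_j·z^{k−j}·x^j ∈ y^k·S. -/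
/-!
Write `T_i(z)` for the `i`-th sum of the recursion. Expanding `(u + v)^(i-j)` binomially and
regrouping gives `T_i(u + v) = ∑_m C(n-i+m, m) v^m T_(i-m)(u)`, so if `y ∣ v` and the lower sums
`T_(i')(u)` lie in `y^(i')S`, then `T_i(u + v) ≡ T_i(u)` modulo `y^i`. Applied with `u = z` and
`v = -b y`, the hypotheses pass from `z` to `w = a x`. For `w` the last sum is
`x^k ∑_j C(n-j, k-j) c_j a^(k-j)`, which vanishes for a suitable `c_k`; applied again with `u = w`
and `v = b y`, this gives the `k`-th sum for `z` in `y^k S`.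
-/

open Finset

section

variable {S : Type*} [CommRing S]

def recursionSum (n : ℕ) (c : ℕ → S) (x z : S) (i : ℕ) : S :=
  ∑ j ∈ range (i + 1), (Nat.choose (n - j) (i - j) : S) * c j * z ^ (i - j) * x ^ j

theorem Nat.choose_sub_mul_choose {n j i m : ℕ} (hj : j ≤ i) (hi : i ≤ n) (hm : m ≤ i - j) :
    (n - j).choose (i - j) * (i - j).choose m =
      (n - j).choose (i - m - j) * (n - i + m).choose m := by
  rw [← Nat.choose_symm hm, Nat.choose_mul (Nat.sub_le _ _)]
  congr 2 <;> omega

theorem recursionSum_congr {n : ℕ} {c c' : ℕ → S} {x z : S} {i : ℕ}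
    (h : ∀ j ≤ i, c j = c' j) :
    recursionSum n c x z i = recursionSum n c' x z i :=
  sum_congr rfl fun j hj => by rw [h j (Nat.lt_succ_iff.mp (mem_range.mp hj))]

theorem recursionSum_add (n : ℕ) (c : ℕ → S) (x u v : S) {i : ℕ} (hi : i ≤ n) :
    recursionSum n c x (u + v) i =
      ∑ m ∈ range (i + 1),
        (Nat.choose (n - i + m) m : S) * v ^ m * recursionSum n c x u (i - m) := by
  have expand : ∀ j ∈ range (i + 1),
      (Nat.choose (n - j) (i - j) : S) * c j * (u + v) ^ (i - j) * x ^ j =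
        ∑ m ∈ range (i - j + 1), (Nat.choose (n - i + m) m : S) * v ^ m *
          ((Nat.choose (n - j) (i - m - j) : S) * c j * u ^ (i - m - j) * x ^ j) := by
    intro j hj
    have hj : j ≤ i := Nat.lt_succ_iff.mp (mem_range.mp hj)
    rw [add_comm u v, add_pow, mul_sum, sum_mul]
    refine sum_congr rfl fun m hm => ?_
    have hm : m ≤ i - j := Nat.lt_succ_iff.mp (mem_range.mp hm)
    have hchoose := congrArg (Nat.cast (R := S)) (Nat.choose_sub_mul_choose hj hi hm)
    push_cast at hchoose
    rw [show i - j - m = i - m - j by omega]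
    linear_combination (c j * v ^ m * u ^ (i - m - j) * x ^ j) * hchoose
  rw [recursionSum, sum_congr rfl expand,
    sum_comm' (t' := range (i + 1)) (s' := fun m => range (i - m + 1))
      (fun j m => by simp only [mem_range]; omega)]
  simp only [recursionSum, mul_sum]

theorem dvd_recursionSum_add_sub {n k : ℕ} {c : ℕ → S} {x y u v : S} (hk : k ≤ n)
    (hv : y ∣ v) (hu : ∀ i < k, y ^ i ∣ recursionSum n c x u i) :
    y ^ k ∣ recursionSum n c x (u + v) k - recursionSum n c x u k := by
  rw [recursionSum_add n c x u v hk, sum_range_succ']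
  simp only [add_zero, Nat.choose_zero_right, Nat.cast_one, pow_zero, one_mul, Nat.sub_zero,
    add_sub_cancel_right]
  refine dvd_sum fun m hm => ?_
  have hm : m < k := mem_range.mp hm
  rw [← pow_mul_pow_sub y (show m + 1 ≤ k by omega)]
  exact mul_dvd_mul (dvd_mul_of_dvd_right (pow_dvd_pow_of_dvd hv _) _) (hu _ (by omega))

theorem recursionSum_update_mul_self (n k : ℕ) (c : ℕ → S) (a x ck : S) :
    recursionSum n (Function.update c k ck) x (a * x) k =
      (∑ j ∈ range k, (Nat.choose (n - j) (k - j) : S) * c j * a ^ (k - j) + ck) * x ^ k := by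
  rw [recursionSum, sum_range_succ, add_mul, sum_mul]
  congr 1
  · refine sum_congr rfl fun j hj => ?_
    have hj : j < k := mem_range.mp hj
    rw [Function.update_of_ne hj.ne, mul_pow, ← pow_sub_mul_pow x hj.le]
    ring
  · simp

theorem exists_recursionSum_update_mul_self_eq_zero (n k : ℕ) (c : ℕ → S) (a x : S) :
    ∃ ck, recursionSum n (Function.update c k ck) x (a * x) k = 0 :=
  ⟨_, by rw [recursionSum_update_mul_self, add_neg_cancel, zero_mul]⟩

end

theorem recursion_step_exists_general {S : Type*} [CommRing S]
    (x y z a b : S) (hz : z = a * x + b * y)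
    (n k : ℕ) (hk : k ≤ n)
    (c : ℕ → S)
    (hcond : ∀ i, 1 ≤ i → i ≤ k - 1 →
      (∑ j ∈ Finset.range (i + 1),
        (Nat.choose (n - j) (i - j) : S) * c j * z ^ (i - j) * x ^ j) ∈
        Ideal.span {y ^ i}) :
    ∃ ck : S,
      (∑ j ∈ Finset.range (k + 1),
        (Nat.choose (n - j) (k - j) : S) * Function.update c k ck j * z ^ (k - j) * x ^ j) ∈
        Ideal.span {y ^ k} := by
  have hz_dvd : ∀ i < k, y ^ i ∣ recursionSum n c x z i := by
    intro i hi
    rcases i.eq_zero_or_pos with rfl | hi0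
    · exact (pow_zero y).symm ▸ one_dvd _
    · exact Ideal.mem_span_singleton.mp (hcond i hi0 (by omega))
  have hax_dvd : ∀ i < k, y ^ i ∣ recursionSum n c x (a * x) i := by
    intro i hi
    have h := dvd_recursionSum_add_sub (v := -b * y) (by omega) (dvd_mul_left y _)
      fun i' hi' => hz_dvd i' (hi'.trans hi)
    rw [show z + -b * y = a * x by rw [hz]; ring] at h
    simpa only [sub_add_cancel] using dvd_add h (hz_dvd i hi)
  obtain ⟨ck, hck⟩ := exists_recursionSum_update_mul_self_eq_zero n k c a x
  refine ⟨ck, Ideal.mem_span_singleton.mpr ?_⟩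
  change y ^ k ∣ recursionSum n (Function.update c k ck) x z k
  have h := dvd_recursionSum_add_sub (v := b * y) hk (dvd_mul_left y b) fun i hi => by
    rw [recursionSum_congr fun j (hj : j ≤ i) =>
      Function.update_of_ne (show j ≠ k by omega) ck c]
    exact hax_dvd i hi
  rwa [hck, sub_zero, ← hz] at h

/-- Lemma 2.2. The recursion can always be continued: given
`z = a·x + b·y` and `a₀ = 1, a₁, …, a_(k-1)` with
`Σ_(j≤i) C(n-j, i-j) aⱼ z^(i-j) xʲ ∈ yⁱS` for `i = 1, …, k-1`, there exists `aₖ` making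
the `k`-th such sum lie in `yᵏS`. -/
theorem recursion_step_exists {S : Type*} [CommRing S] [IsDomain S] [Algebra ℚ S]
    (x y z a b : S) (hz : z = a * x + b * y)
    (n k : ℕ) (hn : 0 < n) (hk : k ≤ n)
    (c : ℕ → S) (hc0 : c 0 = 1)
    (hcond : ∀ i, 1 ≤ i → i ≤ k - 1 →
      (∑ j ∈ Finset.range (i + 1),
        (Nat.choose (n - j) (i - j) : S) * c j * z ^ (i - j) * x ^ j) ∈
        Ideal.span {y ^ i}) :
    ∃ ck : S,
      (∑ j ∈ Finset.range (k + 1),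
        (Nat.choose (n - j) (k - j) : S) * Function.update c k ck j * z ^ (k - j) * x ^ j) ∈
        Ideal.span {y ^ k} :=
  recursion_step_exists_general x y z a b hz n k hk c hcond
end

section
/- Let R be an integrally closed commutative Noetherian integral domain, semilocal of mixed characteristic with prime integer p in its Jacobson radical, all of whose maximal ideals have the same height. Let p, x, y be parameters in R, assume x and y each kill H_1(p^m, x^m, y^m; R) for every positive integer m, and let (z_i)_{i≥1} be a sequence of elements of R with p^N·z_i ∈ (x^i, y^i)R for every positive integer i. Then there exists a positive integer n such that for all i > n, z_i ∈ (x^i, y^i, (xy)^{i−1}z_1, (xy)^{i−2}z_2, …, (xy)^{i−n}z_n)R. -/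
/-- The height of an ideal: the infimum of the heights of primes containing it. -/
noncomputable def idealHeight {R : Type*} [CommRing R] (I : Ideal R) : ℕ∞ :=
  ⨅ (P : PrimeSpectrum R) (_ : I ≤ P.asIdeal), Order.height P

/-- The Koszul syzygies `x j • e i - x i • e j` among `x : Fin n → R`. -/
def koszulSyzygies {R : Type*} [CommRing R] {n : ℕ} (x : Fin n → R) : Set (Fin n → R) :=
  {v | ∃ i j : Fin n, i < j ∧
    v = x j • (Pi.single i 1 : Fin n → R) - x i • (Pi.single j 1 : Fin n → R)}

/-- `c` kills the first Koszul homology `H₁(x₁,…,xₙ; R)`: `c` times any syzygy of the `x i`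
is an `R`-combination of the Koszul syzygies. -/
def killsH1 {R : Type*} [CommRing R] {n : ℕ} (c : R) (x : Fin n → R) : Prop :=
  ∀ a : Fin n → R, (∑ i, a i * x i) = 0 → (c • a) ∈ Submodule.span R (koszulSyzygies x)

/-- `x₁,…,xₙ` are parameters: any `k` distinct elements among them generate an ideal
of height `k`. -/
def isParameters {R : Type*} [CommRing R] {n : ℕ} (x : Fin n → R) : Prop :=
  ∀ s : Finset (Fin n), idealHeight (Ideal.span (x '' (s : Set (Fin n)))) = (s.card : ℕ∞)

/-- `R⁺`: the integral closure of `R` in an algebraic closure of its fraction field. -/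
noncomputable abbrev Rplus (R : Type*) [CommRing R] [IsDomain R] :=
  integralClosure R (AlgebraicClosure (FractionRing R))


/-!
The condition on `x` and `y` that drives the proof is that `y` is a nonzerodivisor modulo `x`.
This holds because `R` is normal and `(x, y)` has height two: an associated prime `J = (x) : s`
of `R ⧸ (x)` containing `y` either is stable under `s / x`, which is then integral and so lies in
`R`, or has an element `w` with `r = w s / x ∈ R \ J`; then `r J ⊆ (w)`, so `J` is minimal over
`(w)`, against Krull's principal ideal theorem.

Then `p ^ i zᵢ ∈ (xⁱ, yⁱ)` for `i > N`, so by the Koszul hypothesis `x zᵢ, y zᵢ ∈ (xⁱ, yⁱ)`, and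
regularity of `y` modulo powers of `x` gives `zᵢ ≡ wᵢ (xy)^(i-1) mod (xⁱ, yⁱ)`. Noetherianity puts
`wᵢ` in the ideal generated by finitely many `w_m`, and
`w_m (xy)^(i-1) ≡ (xy)^(i-m) z_m mod (xⁱ, yⁱ)`.
-/

open Ideal

section

variable {R : Type*} [CommRing R]

lemma idealHeight_le_height (I : Ideal R) : idealHeight I ≤ I.height := by
  rw [height_eq_inf_minimalPrimes]
  refine le_iInf₂ fun J hJ => ?_
  have := hJ.isPrime
  exact (iInf₂_le (⟨J, this⟩ : PrimeSpectrum R) hJ.1.2).trans_eq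
    (PrimeSpectrum.height_eq_orderHeight ⟨J, this⟩).symm

lemma isParameters.one_lt_height_span_pair {a x y : R} (h : isParameters ![a, x, y]) :
    1 < (span {x, y}).height := by
  have h₂ := h {1, 2}
  simp only [Finset.coe_insert, Finset.coe_singleton, Set.image_insert_eq, Set.image_singleton,
    Matrix.cons_val_one, Matrix.cons_val_zero, Matrix.cons_val, Fin.isValue,
    Finset.card_insert_of_notMem, Finset.mem_singleton, Fin.reduceEq, not_false_eq_true,
    Finset.card_singleton, Nat.reduceAdd, Nat.cast_ofNat] at h₂
  exact (h₂ ▸ idealHeight_le_height _).trans_lt' (by norm_num)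

lemma Ideal.mem_minimalPrimes_span_singleton_of_forall_dvd_mul {J : Ideal R} [J.IsPrime]
    {w r : R} (hw : w ∈ J) (hr : r ∉ J) (h : ∀ j ∈ J, w ∣ j * r) :
    J ∈ (span {w}).minimalPrimes := by
  refine ⟨⟨‹_›, span_le.mpr (by simpa using hw)⟩, fun Q ⟨hQ, hwQ⟩ hQJ j hj => ?_⟩
  have hjr : j * r ∈ Q := Ideal.mem_of_dvd _ (h j hj) (hwQ (mem_span_singleton_self w))
  exact (hQ.mem_or_mem hjr).resolve_right fun hrQ => hr (hQJ hrQ)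

lemma killsH1.mul_mem_span_pair {c P X Y z : R} (h : killsH1 c ![P, X, Y])
    (hz : P * z ∈ span {X, Y}) : c * z ∈ span {X, Y} := by
  obtain ⟨A, B, hAB⟩ := mem_span_pair.mp hz
  have hsyz := h ![z, -A, -B] (by
    simp only [Fin.sum_univ_three, Matrix.cons_val_zero, Matrix.cons_val_one, Matrix.cons_val,
      Fin.isValue, neg_mul]
    linear_combination -hAB)
  have hle : Submodule.span R (koszulSyzygies ![P, X, Y]) ≤
      Submodule.comap (LinearMap.proj 0) (span {X, Y}) := by
    rw [Submodule.span_le]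
    rintro _ ⟨i, j, hij, rfl⟩
    fin_cases i <;> fin_cases j <;> simp at hij ⊢ <;> exact subset_span (by simp)
  simpa using hle hsyz

lemma exists_forall_mem_span_image_Icc [IsNoetherianRing R] (f : ℕ → R) (a : ℕ) :
    ∃ n, a ≤ n ∧ ∀ i, a ≤ i → f i ∈ span (f '' Set.Icc a n) := by
  let I : ℕ →o Ideal R := ⟨fun k => span (f '' Set.Icc a (a + k)), fun k l hkl =>
    span_mono (Set.image_mono (Set.Icc_subset_Icc le_rfl (by omega)))⟩
  obtain ⟨k, hk⟩ := monotone_stabilizes_iff_noetherian.mpr inferInstance I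
  refine ⟨a + k, by omega, fun i hai => ?_⟩
  have hi : f i ∈ I (i - a) := subset_span ⟨i, ⟨hai, by omega⟩, rfl⟩
  rcases le_total k (i - a) with hki | hik
  · rwa [← hk _ hki] at hi
  · exact I.monotone hik hi

lemma mul_pow_mul_mem_span_pow_pair {x y v : R} {m i : ℕ} (hmi : m ≤ i)
    (hv : v ∈ span {x ^ m, y ^ m}) : (x * y) ^ (i - m) * v ∈ span {x ^ i, y ^ i} := by
  obtain ⟨a, b, rfl⟩ := mem_span_pair.mp hv
  refine mem_span_pair.mpr ⟨a * y ^ (i - m), b * x ^ (i - m), ?_⟩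
  rw [← pow_sub_mul_pow x hmi, ← pow_sub_mul_pow y hmi]
  ring

lemma mem_span_of_sub_mul_pow_mem {x y : R} {z w : ℕ → R} {a n i : ℕ} (ha : 0 < a)
    (hai : a ≤ i) (hni : n < i)
    (hw : ∀ m, a ≤ m → z m - w m * (x * y) ^ (m - 1) ∈ span {x ^ m, y ^ m})
    (hwi : w i ∈ span (w '' Set.Icc a n)) :
    z i ∈ span ({x ^ i, y ^ i} ∪ (fun m : ℕ => (x * y) ^ (i - m) * z m) '' Set.Icc 1 n) := by
  set G := span ({x ^ i, y ^ i} ∪ (fun m : ℕ => (x * y) ^ (i - m) * z m) '' Set.Icc 1 n)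
  have hpair : span {x ^ i, y ^ i} ≤ G := span_mono Set.subset_union_left
  have hcolon : span (w '' Set.Icc a n) ≤ G.colon (span {(x * y) ^ (i - 1)}) := by
    rw [span_le]
    rintro _ ⟨m, ⟨ham, hmn⟩, rfl⟩
    rw [SetLike.mem_coe, mem_colon_span_singleton]
    have hz : (x * y) ^ (i - m) * z m ∈ G := subset_span (Or.inr ⟨m, ⟨by omega, hmn⟩, rfl⟩)
    have hsplit : w m * (x * y) ^ (i - 1) = (x * y) ^ (i - m) * z m -
        (x * y) ^ (i - m) * (z m - w m * (x * y) ^ (m - 1)) := by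
      rw [← pow_sub_mul_pow (x * y) (show m - 1 ≤ i - 1 by omega),
        show i - 1 - (m - 1) = i - m by omega]
      ring
    rw [hsplit]
    exact G.sub_mem hz (hpair (mul_pow_mul_mem_span_pow_pair (by omega) (hw m ham)))
  have hwi' : w i * (x * y) ^ (i - 1) ∈ G := mem_colon_span_singleton.mp (hcolon hwi)
  simpa using G.add_mem (hpair (hw i hai)) hwi'

variable [IsDomain R]

lemma isParameters.ne_zero {a x y : R} (h : isParameters ![a, x, y]) : x ≠ 0 := by
  have h₁ := h {1}
  simp only [Finset.coe_singleton, Set.image_singleton] at h₁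
  have h₂ := h₁ ▸ idealHeight_le_height (span {x})
  rintro rfl
  simp at h₂

lemma dvd_of_forall_mem_exists_mul_eq [IsNoetherianRing R] [IsIntegrallyClosed R] {x s : R}
    {J : Ideal R} (hx : x ≠ 0) (hxJ : x ∈ J) (h : ∀ j ∈ J, ∃ r ∈ J, j * s = x * r) : x ∣ s := by
  let K := FractionRing R
  have hx' : algebraMap R K x ≠ 0 := IsFractionRing.to_map_ne_zero_of_mem_nonZeroDivisors
    (mem_nonZeroDivisors_of_ne_zero hx)
  let M := Submodule.map (Algebra.linearMap R K) J
  have hint : IsIntegral R (algebraMap R K s / algebraMap R K x) := by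
    refine isIntegral_of_smul_mem_submodule M ?_ ((IsNoetherian.noetherian J).map _) _ ?_
    · exact (Submodule.ne_bot_iff _).mpr ⟨_, ⟨x, hxJ, rfl⟩, hx'⟩
    rintro _ ⟨j, hj, rfl⟩
    obtain ⟨r, hr, hjr⟩ := h j hj
    refine ⟨r, hr, ?_⟩
    simp only [Algebra.linearMap_apply, smul_eq_mul]
    rw [div_mul_eq_mul_div, eq_div_iff hx', ← map_mul, ← map_mul, mul_comm r, ← hjr, mul_comm]
  obtain ⟨q, hq⟩ := IsIntegrallyClosed.algebraMap_eq_of_integral hint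
  refine ⟨q, IsFractionRing.injective R K ?_⟩
  rw [map_mul, hq, mul_div_cancel₀ _ hx']

theorem dvd_of_dvd_mul_left_of_one_lt_height [IsNoetherianRing R] [IsIntegrallyClosed R]
    {x y t : R} (hx : x ≠ 0) (hxy : 1 < (span {x, y}).height) (h : x ∣ y * t) : x ∣ t := by
  by_contra ht
  let π := Ideal.Quotient.mk (span {x})
  have hπ : ∀ r, π r = 0 ↔ x ∣ r := fun r => Quotient.eq_zero_iff_dvd x r
  obtain ⟨J, hJ, hyJ⟩ := exists_le_isAssociatedPrime_of_isNoetherianRing R (π t)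
    (by rwa [Ne, hπ])
  obtain ⟨hJprime, s', rfl⟩ := isAssociatedPrime_iff.mp hJ
  obtain ⟨s, rfl⟩ := Quotient.mk_surjective s'
  have hcolon : ∀ r u, r ∈ (⊥ : Submodule R (R ⧸ span {x})).colon {π u} ↔ x ∣ r * u := by
    intro r u
    rw [Submodule.mem_colon_singleton, Submodule.mem_bot, Algebra.smul_def,
      Quotient.algebraMap_eq, ← map_mul, hπ]
  set J := (⊥ : Submodule R (R ⧸ span {x})).colon {π s}
  have hmem : ∀ r, r ∈ J ↔ x ∣ r * s := fun r => hcolon r s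
  have hxJ : x ∈ J := (hmem x).mpr (dvd_mul_right x s)
  by_cases hstab : ∀ j ∈ J, ∃ r ∈ J, j * s = x * r
  · refine hJprime.ne_top ((eq_top_iff_one J).mpr ((hmem 1).mpr ?_))
    simpa using dvd_of_forall_mem_exists_mul_eq hx hxJ hstab
  push Not at hstab
  obtain ⟨w, hwJ, hw⟩ := hstab
  obtain ⟨r, hr⟩ := (hmem w).mp hwJ
  have : J.IsPrime := hJprime
  have hmin : J ∈ (span {w}).minimalPrimes := by
    refine mem_minimalPrimes_span_singleton_of_forall_dvd_mul hwJ (fun hr' => hw r hr' hr) ?_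
    intro j hj
    obtain ⟨ρ, hρ⟩ := (hmem j).mp hj
    refine ⟨ρ, mul_left_cancel₀ hx ?_⟩
    linear_combination w * hρ - j * hr
  have hxyJ : span {x, y} ≤ J := by
    rw [span_le, Set.insert_subset_iff, Set.singleton_subset_iff]
    exact ⟨hxJ, hyJ ((hcolon y t).mpr h)⟩
  exact (hxy.trans_le (height_mono hxyJ)).not_ge
    (height_le_one_of_isPrincipal_of_mem_minimalPrimes _ _ hmin)

lemma pow_dvd_of_pow_dvd_mul_of_forall_dvd {x y : R} (hx : x ≠ 0)
    (hxy : ∀ t, x ∣ y * t → x ∣ t) (a : ℕ) {t : R} (h : x ^ a ∣ y * t) : x ^ a ∣ t := by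
  induction a generalizing t with
  | zero => simp
  | succ a ih =>
    obtain ⟨t₁, rfl⟩ := hxy t (dvd_of_mul_right_dvd (pow_succ' x a ▸ h))
    rw [pow_succ', mul_left_comm, mul_dvd_mul_iff_left hx] at h
    rw [pow_succ', mul_dvd_mul_iff_left hx]
    exact ih h

lemma pow_dvd_of_pow_dvd_pow_mul_of_forall_dvd {x y : R} (hx : x ≠ 0)
    (hxy : ∀ t, x ∣ y * t → x ∣ t) (a b : ℕ) {t : R} (h : x ^ a ∣ y ^ b * t) : x ^ a ∣ t := by
  induction b generalizing t with
  | zero => simpa using h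
  | succ b ih =>
    exact pow_dvd_of_pow_dvd_mul_of_forall_dvd hx hxy a (ih (by rwa [← mul_assoc, ← pow_succ]))

lemma exists_sub_mul_pow_mem_span_pow_pair {x y u : R} (hx : x ≠ 0)
    (hxy : ∀ t, x ∣ y * t → x ∣ t) (j : ℕ) (hxu : x * u ∈ span {x ^ (j + 1), y ^ (j + 1)})
    (hyu : y * u ∈ span {x ^ (j + 1), y ^ (j + 1)}) :
    ∃ w, u - w * (x * y) ^ j ∈ span {x ^ (j + 1), y ^ (j + 1)} := by
  have key := pow_dvd_of_pow_dvd_pow_mul_of_forall_dvd hx hxy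
  obtain ⟨α, β, hαβ⟩ := mem_span_pair.mp hxu
  obtain ⟨α', β', hαβ'⟩ := mem_span_pair.mp hyu
  obtain ⟨β₀, rfl⟩ : x ∣ β :=
    pow_one x ▸ key 1 (j + 1) ⟨u - α * x ^ j, by rw [pow_one]; linear_combination hαβ⟩
  have hu : u = α * x ^ j + β₀ * y ^ (j + 1) :=
    mul_left_cancel₀ hx (by linear_combination -hαβ)
  obtain ⟨c, hc⟩ : x ^ j ∣ β' - β₀ * y :=
    key j (j + 1) ⟨α * y - α' * x, by linear_combination hαβ' + y * hu⟩
  have hαc : α * y - α' * x = c * y ^ (j + 1) :=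
    mul_left_cancel₀ (pow_ne_zero j hx)
      (by linear_combination y ^ (j + 1) * hc - hαβ' - y * hu)
  obtain ⟨d, hd⟩ : x ∣ α - c * y ^ j := hxy _ ⟨α', by linear_combination hαc⟩
  exact ⟨c, mem_span_pair.mpr ⟨d, β₀, by linear_combination -hu - x ^ j * hd⟩⟩

end

theorem eventually_in_earlier_ideal_general {R : Type*} [CommRing R] [IsDomain R]
    [IsNoetherianRing R] [IsIntegrallyClosed R]
    (p : ℕ)
    (x y : R) (hpar : isParameters ![(p : R), x, y])
    (hkill : ∀ m : ℕ, 0 < m →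
      killsH1 x ![(p : R) ^ m, x ^ m, y ^ m] ∧ killsH1 y ![(p : R) ^ m, x ^ m, y ^ m])
    (N : ℕ) (z : ℕ → R)
    (hz : ∀ i : ℕ, 0 < i → (p : R) ^ N * z i ∈ Ideal.span {x ^ i, y ^ i}) :
    ∃ n : ℕ, 0 < n ∧ ∀ i : ℕ, n < i →
      z i ∈ Ideal.span ({x ^ i, y ^ i} ∪
        (fun m : ℕ => (x * y) ^ (i - m) * z m) '' Set.Icc 1 n) := by
  have hx : x ≠ 0 := hpar.ne_zero
  have hcolon : ∀ t, x ∣ y * t → x ∣ t := fun t =>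
    dvd_of_dvd_mul_left_of_one_lt_height hx hpar.one_lt_height_span_pair
  have hw : ∀ i, ∃ w, N < i → z i - w * (x * y) ^ (i - 1) ∈ span {x ^ i, y ^ i} := by
    rintro (_ | j)
    · exact ⟨0, by omega⟩
    by_cases hj : N < j + 1
    · have hpz : (p : R) ^ (j + 1) * z (j + 1) ∈ span {x ^ (j + 1), y ^ (j + 1)} := by
        rw [← pow_sub_mul_pow (p : R) hj.le, mul_assoc]
        exact mul_mem_left _ _ (hz _ j.succ_pos)
      obtain ⟨hxk, hyk⟩ := hkill (j + 1) j.succ_pos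
      obtain ⟨w, hw⟩ := exists_sub_mul_pow_mem_span_pow_pair hx hcolon j
        (hxk.mul_mem_span_pair hpz) (hyk.mul_mem_span_pair hpz)
      exact ⟨w, fun _ => hw⟩
    · exact ⟨0, fun h => absurd h hj⟩
  choose w hw using hw
  obtain ⟨n, hNn, hspan⟩ := exists_forall_mem_span_image_Icc w (N + 1)
  exact ⟨n, by omega, fun i hi =>
    mem_span_of_sub_mul_pow_mem N.succ_pos (by omega) hi hw (hspan i (by omega))⟩

/-- Lemma 2.4. If `p^N·zᵢ ∈ (xⁱ,yⁱ)R` for all `i ≥ 1`, then there is `n`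
such that for all `i > n`, `zᵢ ∈ (xⁱ, yⁱ, (xy)^(i-1)z₁, …, (xy)^(i-n)z_n)R`. -/
theorem eventually_in_earlier_ideal {R : Type*} [CommRing R] [IsDomain R]
    [IsNoetherianRing R] [IsIntegrallyClosed R]
    (p : ℕ) (hp : p.Prime) (hpJ : (p : R) ∈ Ideal.jacobson (⊥ : Ideal R)) (hp0 : (p : R) ≠ 0)
    (hsemi : {I : Ideal R | I.IsMaximal}.Finite)
    (hht : ∀ m m' : Ideal R, m.IsMaximal → m'.IsMaximal → idealHeight m = idealHeight m')
    (x y : R) (hpar : isParameters ![(p : R), x, y])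
    (hkill : ∀ m : ℕ, 0 < m →
      killsH1 x ![(p : R) ^ m, x ^ m, y ^ m] ∧ killsH1 y ![(p : R) ^ m, x ^ m, y ^ m])
    (N : ℕ) (z : ℕ → R)
    (hz : ∀ i : ℕ, 0 < i → (p : R) ^ N * z i ∈ Ideal.span {x ^ i, y ^ i}) :
    ∃ n : ℕ, 0 < n ∧ ∀ i : ℕ, n < i →
      z i ∈ Ideal.span ({x ^ i, y ^ i} ∪
        (fun m : ℕ => (x * y) ^ (i - m) * z m) '' Set.Icc 1 n) :=
  eventually_in_earlier_ideal_general p x y hpar hkill N z hz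
end

section
/- Let p be a prime, let M > L be positive integers, let S be a commutative integral domain containing the rational numbers, and let x, y, z, a_1, …, a_k ∈ S with a_0 = 1 and k < p^L an integer, such that Σ_{j=0}^i C(p^L−j, i−j)·a_j·z^{i−j}·x^j ∈ y^i·S for all i ≤ k. For j > 0 set ã_j = (∏_{m=0}^{j−1} (p^M−m)/(p^L−m))·a_j. Then for each j > 0 there is a rational number q_j which is a unit in the localization ℤ_(p) (i.e., v_p(q_j) = 0) such that ã_j = p^{M−L}·q_j·a_j, and for all i ≤ k, Σ_{j=0}^i C(p^M−j, i−j)·ã_j·z^{i−j}·x^j = p^{M−L}·q_i·Σ_{j=0}^i C(p^L−j, i−j)·a_j·z^{i−j}·x^j ∈ y^i·S (where ã_0 = 1 in the left-hand sum). -/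
/-!
Write `D_N(j) = N (N - 1) ⋯ (N - j + 1)`. The rescaling factor of `aⱼ` is `D_{p^M}(j) / D_{p^L}(j)`,
and `C(N - j, i - j) · D_N(j) = D_N(i) / (i - j)!`, so every term of the `i`-th sum gets multiplied
by the same factor `D_{p^M}(i) / D_{p^L}(i)`. For `0 < m < p^A` we have `v_p(p^A - m) = v_p(m)`,
so each factor `(p^M - m)/(p^L - m)` with `m ≥ 1` is a `p`-adic unit; the factor for `m = 0`
is `p^(M-L)`.
-/

open Finset

theorem cast_descFactorial_eq_prod_range {R : Type*} [CommRing R] (N j : ℕ) :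
    (N.descFactorial j : R) = ∏ m ∈ range j, ((N : R) - m) := by
  induction j with
  | zero => simp
  | succ j ih =>
    rw [Nat.descFactorial_succ, Nat.cast_mul, prod_range_succ, ← ih]
    rcases le_or_gt j N with hjN | hNj
    · rw [Nat.cast_sub hjN, mul_comm]
    · simp [Nat.descFactorial_eq_zero_iff_lt.mpr hNj]

theorem choose_mul_prod_range_div {K : Type*} [Field K] [CharZero K] {N₁ N₂ i j : ℕ}
    (hji : j ≤ i) (hi : i ≤ N₂) :
    ((N₁ - j).choose (i - j) : K) * ∏ m ∈ range j, ((N₁ : K) - m) / ((N₂ : K) - m) =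
      ((N₂ - j).choose (i - j) : K) * ∏ m ∈ range i, ((N₁ : K) - m) / ((N₂ : K) - m) := by
  have hsplit : ∀ N : ℕ, (N.descFactorial i : K) =
      (i - j).factorial * (N - j).choose (i - j) * N.descFactorial j := fun N => by
    rw [← Nat.descFactorial_mul_descFactorial hji, Nat.descFactorial_eq_factorial_mul_choose]
    push_cast; ring
  have hD : ∀ n ≤ N₂, (N₂.descFactorial n : K) ≠ 0 := fun n hn =>
    Nat.cast_ne_zero.mpr (Nat.descFactorial_pos.mpr hn).ne'
  simp only [prod_div_distrib, ← cast_descFactorial_eq_prod_range]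
  rw [mul_div_assoc', mul_div_assoc', div_eq_div_iff (hD j (hji.trans hi)) (hD i hi)]
  linear_combination ((N₁ - j).choose (i - j) : K) * N₁.descFactorial j * hsplit N₂ -
    ((N₂ - j).choose (i - j) : K) * N₂.descFactorial j * hsplit N₁

theorem prod_range_natCast_sub_div_ne_zero {K : Type*} [Field K] [CharZero K] {N₁ N₂ j : ℕ}
    (h₁ : j ≤ N₁) (h₂ : j ≤ N₂) :
    ∏ m ∈ range j, ((N₁ : K) - m) / ((N₂ : K) - m) ≠ 0 := by
  simp only [prod_div_distrib, ← cast_descFactorial_eq_prod_range]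
  exact div_ne_zero (Nat.cast_ne_zero.mpr (Nat.descFactorial_pos.mpr h₁).ne')
    (Nat.cast_ne_zero.mpr (Nat.descFactorial_pos.mpr h₂).ne')

theorem padicValRat_finset_prod {p : ℕ} [Fact p.Prime] {ι : Type*} (s : Finset ι) {f : ι → ℚ}
    (hf : ∀ i ∈ s, f i ≠ 0) :
    padicValRat p (∏ i ∈ s, f i) = ∑ i ∈ s, padicValRat p (f i) := by
  classical
  induction s using Finset.induction_on with
  | empty => simp
  | insert i s hi ih =>
    rw [prod_insert hi, sum_insert hi,
      padicValRat.mul (hf i (mem_insert_self i s)) (prod_ne_zero_iff.mpr fun j hj =>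
        hf j (mem_insert_of_mem hj)), ih fun j hj => hf j (mem_insert_of_mem hj)]

theorem padicValRat_pow_sub_natCast {p : ℕ} [hp : Fact p.Prime] {A m : ℕ} (hm : 0 < m)
    (hmA : m < p ^ A) : padicValRat p ((p : ℚ) ^ A - m) = padicValNat p m := by
  have hm' : (m : ℚ) ≠ 0 := by positivity
  have hval : padicValNat p m < A :=
    (padicValNat_le_nat_log m).trans_lt (Nat.log_lt_of_lt_pow hm.ne' hmA)
  have hne : -(m : ℚ) + (p : ℚ) ^ A ≠ 0 := by
    rw [neg_add_eq_sub, sub_ne_zero]; exact_mod_cast hmA.ne'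
  rw [sub_eq_neg_add, padicValRat.add_eq_of_lt hne (neg_ne_zero.mpr hm')
      (pow_ne_zero _ (by exact_mod_cast hp.out.ne_zero)), padicValRat.neg, padicValRat.of_nat]
  simpa [padicValRat.self hp.out.one_lt] using hval

theorem padicValRat_prod_Ico_pow_sub_div {p : ℕ} [hp : Fact p.Prime] {A B j : ℕ}
    (hA : j ≤ p ^ A) (hB : j ≤ p ^ B) :
    padicValRat p (∏ m ∈ Ico 1 j, ((p : ℚ) ^ A - m) / ((p : ℚ) ^ B - m)) = 0 := by
  have hne : ∀ {C m : ℕ}, m < p ^ C → (p : ℚ) ^ C - m ≠ 0 := fun h =>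
    sub_ne_zero.mpr (by exact_mod_cast h.ne')
  have hmem : ∀ m ∈ Ico 1 j, 0 < m ∧ m < p ^ A ∧ m < p ^ B := fun m hm => by
    rw [mem_Ico] at hm; omega
  rw [padicValRat_finset_prod _ fun m hm =>
    div_ne_zero (hne (hmem m hm).2.1) (hne (hmem m hm).2.2)]
  refine sum_eq_zero fun m hm => ?_
  obtain ⟨hm0, hmA, hmB⟩ := hmem m hm
  rw [padicValRat.div (hne hmA) (hne hmB), padicValRat_pow_sub_natCast hm0 hmA,
    padicValRat_pow_sub_natCast hm0 hmB, sub_self]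

theorem sum_choose_mul_prod_smul {S : Type*} [CommRing S] [Algebra ℚ S] {N₁ N₂ i : ℕ}
    (hi : i ≤ N₂) (a : ℕ → S) (x z : S) :
    ∑ j ∈ range (i + 1), ((N₁ - j).choose (i - j) : S) *
        ((∏ m ∈ range j, ((N₁ : ℚ) - m) / ((N₂ : ℚ) - m)) • a j) * z ^ (i - j) * x ^ j =
      (∏ m ∈ range i, ((N₁ : ℚ) - m) / ((N₂ : ℚ) - m)) •
        ∑ j ∈ range (i + 1), ((N₂ - j).choose (i - j) : S) * a j * z ^ (i - j) * x ^ j := by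
  rw [smul_sum]
  refine sum_congr rfl fun j hj => ?_
  have hji : j ≤ i := Nat.lt_succ_iff.mp (mem_range.mp hj)
  have key := congrArg (algebraMap ℚ S) (choose_mul_prod_range_div (N₁ := N₁) hji hi)
  simp only [map_mul, map_natCast] at key
  simp only [Algebra.smul_def]
  linear_combination a j * z ^ (i - j) * x ^ j * key

theorem rescale_coefficients_general {S : Type*} [CommRing S] [Algebra ℚ S]
    (p : ℕ) (hp : p.Prime) (L M : ℕ) (hLM : L < M)
    (x y z : S) (k : ℕ) (hk : k < p ^ L)
    (a : ℕ → S) (ha0 : a 0 = 1)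
    (hcond : ∀ i ≤ k,
      (∑ j ∈ Finset.range (i + 1),
        (Nat.choose (p ^ L - j) (i - j) : S) * a j * z ^ (i - j) * x ^ j) ∈
        Ideal.span {y ^ i})
    (atil : ℕ → S) (hatil0 : atil 0 = 1)
    (hatil : ∀ j, 0 < j →
      atil j = (∏ m ∈ Finset.range j, (((p : ℚ) ^ M - m) / ((p : ℚ) ^ L - m))) • a j) :
    ∃ q : ℕ → ℚ,
      (∀ j, 0 < j → j ≤ k → q j ≠ 0 ∧ padicValRat p (q j) = 0 ∧
        atil j = ((p : ℚ) ^ (M - L) * q j) • a j) ∧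
      (∀ i ≤ k,
        (∑ j ∈ Finset.range (i + 1),
          (Nat.choose (p ^ M - j) (i - j) : S) * atil j * z ^ (i - j) * x ^ j) =
          ((p : ℚ) ^ (M - L) * q i) •
            (∑ j ∈ Finset.range (i + 1),
              (Nat.choose (p ^ L - j) (i - j) : S) * a j * z ^ (i - j) * x ^ j) ∧
        (∑ j ∈ Finset.range (i + 1),
          (Nat.choose (p ^ M - j) (i - j) : S) * atil j * z ^ (i - j) * x ^ j) ∈
          Ideal.span {y ^ i}) := by
  have := Fact.mk hp
  have hpLM : p ^ L ≤ p ^ M := Nat.pow_le_pow_right hp.pos hLM.le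
  have hp0 : (p : ℚ) ^ (M - L) ≠ 0 := pow_ne_zero _ (by exact_mod_cast hp.ne_zero)
  set ρ : ℕ → ℚ := fun j => ∏ m ∈ range j, ((p : ℚ) ^ M - m) / ((p : ℚ) ^ L - m) with hρ
  have hatil' : ∀ j, atil j = ρ j • a j := fun j => by
    rcases j.eq_zero_or_pos with rfl | hj
    · simp [hρ, hatil0, ha0]
    · exact hatil j hj
  have hρ_pos : ∀ j, 0 < j →
      ρ j = (p : ℚ) ^ (M - L) * ∏ m ∈ Ico 1 j, ((p : ℚ) ^ M - m) / ((p : ℚ) ^ L - m) :=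
    fun j hj => by
      simp only [hρ]
      rw [prod_range_eq_mul_Ico _ hj, Nat.cast_zero, sub_zero, sub_zero,
        pow_sub₀ _ (by exact_mod_cast hp.ne_zero) hLM.le, div_eq_mul_inv]
  -- `q 0 = p^(L-M)` is forced by the identity for `i = 0`.
  refine ⟨fun j => ((p : ℚ) ^ (M - L))⁻¹ * ρ j, fun j hj hjk => ⟨?_, ?_, ?_⟩, fun i hi => ?_⟩
    <;> dsimp only
  · have hρ_ne := prod_range_natCast_sub_div_ne_zero (K := ℚ) (N₁ := p ^ M) (N₂ := p ^ L)
      (by omega) (by omega : j ≤ p ^ L)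
    push_cast at hρ_ne
    exact mul_ne_zero (inv_ne_zero hp0) hρ_ne
  · rw [hρ_pos j hj, inv_mul_cancel_left₀ hp0]
    exact padicValRat_prod_Ico_pow_sub_div (by omega) (by omega)
  · rw [mul_inv_cancel_left₀ hp0]
    exact hatil' j
  · have hsum := sum_choose_mul_prod_smul (N₁ := p ^ M) (hi.trans hk.le) a x z
    push_cast at hsum
    simp only [mul_inv_cancel_left₀ hp0, hatil']
    exact ⟨hsum, hsum ▸ Submodule.smul_of_tower_mem _ _ (hcond i hi)⟩

/-- Lemma 2.5. Rescaling the coefficients `aⱼ` by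
`∏_(m<j) (p^M - m)/(p^L - m)` replaces each by `p^(M-L)` times a `ℤ_(p)`-unit multiple, and
transforms the sums `Σⱼ C(p^L-j, i-j) aⱼ z^(i-j) xʲ` into `p^(M-L)·qᵢ` times themselves,
keeping them in `yⁱS`. -/
theorem rescale_coefficients {S : Type*} [CommRing S] [IsDomain S] [Algebra ℚ S]
    (p : ℕ) (hp : p.Prime) (L M : ℕ) (hL : 0 < L) (hLM : L < M)
    (x y z : S) (k : ℕ) (hk : k < p ^ L)
    (a : ℕ → S) (ha0 : a 0 = 1)
    (hcond : ∀ i ≤ k,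
      (∑ j ∈ Finset.range (i + 1),
        (Nat.choose (p ^ L - j) (i - j) : S) * a j * z ^ (i - j) * x ^ j) ∈
        Ideal.span {y ^ i})
    (atil : ℕ → S) (hatil0 : atil 0 = 1)
    (hatil : ∀ j, 0 < j →
      atil j = (∏ m ∈ Finset.range j, (((p : ℚ) ^ M - m) / ((p : ℚ) ^ L - m))) • a j) :
    ∃ q : ℕ → ℚ,
      (∀ j, 0 < j → j ≤ k → q j ≠ 0 ∧ padicValRat p (q j) = 0 ∧
        atil j = ((p : ℚ) ^ (M - L) * q j) • a j) ∧
      (∀ i ≤ k,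
        (∑ j ∈ Finset.range (i + 1),
          (Nat.choose (p ^ M - j) (i - j) : S) * atil j * z ^ (i - j) * x ^ j) =
          ((p : ℚ) ^ (M - L) * q i) •
            (∑ j ∈ Finset.range (i + 1),
              (Nat.choose (p ^ L - j) (i - j) : S) * a j * z ^ (i - j) * x ^ j) ∧
        (∑ j ∈ Finset.range (i + 1),
          (Nat.choose (p ^ M - j) (i - j) : S) * atil j * z ^ (i - j) * x ^ j) ∈
          Ideal.span {y ^ i}) :=
  rescale_coefficients_general p hp L M hLM x y z k hk a ha0 hcond atil hatil0 hatil
end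

section
/- Let p be a prime and let d, i, M, L be integers with L ≤ M and 0 < d < i ≤ p^L. Let S be a commutative integral domain containing the rational numbers and let x, y, z, a_0, a_1, …, a_{i−1} ∈ S satisfy Σ_{m=0}^h C(p^L−m, h−m)·a_m·z^{h−m}·x^m ∈ y^h·S for every integer h < i. Define ã_j = 0 for j < d and ã_j = y^d·C(p^L−j+d, i−j)·a_{j−d}/C(p^M−j, i−j) for d ≤ j ≤ i−1 (the binomial coefficients C(p^M−j, i−j) are nonzero integers, hence invertible in S). Then Σ_{j=0}^k C(p^M−j, k−j)·ã_j·z^{k−j}·x^j ∈ y^k·S for all k < i. -/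
open Finset

/-!
Write `j = d + m`. Both `C(n, r)·C(r, s)` and `C(N, r)·C(r, s)` factor as
`C(·, s)·C(· - s, r - s)`, so
`C(n, s)·C(N, r)/C(n, r) = C(N - s, r - s)/C(n - s, r - s)·C(N, s)`;
with `n = p^M - j`, `N = p^L - m`, `r = i - j`, `s = k - j` the right-hand quotient depends on `k`
only. Hence the `k`-th rescaled sum is a rational multiple of `x^d y^d` times the `(k - d)`-th
original sum, which lies in `y^(k-d) S`.
-/

theorem choose_mul_div_choose_eq {K : Type*} [Field K] [CharZero K] {n N r s : ℕ}
    (hsr : s ≤ r) (hrn : r ≤ n) :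
    (n.choose s : K) * ((N.choose r : K) / n.choose r) =
      ((N - s).choose (r - s) : K) / (n - s).choose (r - s) * N.choose s := by
  have hnr : (n.choose r : K) ≠ 0 := Nat.cast_ne_zero.2 (Nat.choose_pos hrn).ne'
  have hnsr : ((n - s).choose (r - s) : K) ≠ 0 :=
    Nat.cast_ne_zero.2 (Nat.choose_pos (by omega)).ne'
  have hrs : (r.choose s : K) ≠ 0 := Nat.cast_ne_zero.2 (Nat.choose_pos hsr).ne'
  have hN : (N.choose r * r.choose s : K) = N.choose s * (N - s).choose (r - s) := by
    exact_mod_cast Nat.choose_mul hsr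
  have hn : (n.choose r * r.choose s : K) = n.choose s * (n - s).choose (r - s) := by
    exact_mod_cast Nat.choose_mul hsr
  field_simp
  apply mul_left_cancel₀ hrs
  linear_combination (n.choose s * (n - s).choose (r - s) : K) * hN -
    (N.choose s * (N - s).choose (r - s) : K) * hn

section BinomialSum

variable {S : Type*} [CommRing S]

def binomialSum (N : ℕ) (c : ℕ → S) (z x : S) (k : ℕ) : S :=
  ∑ j ∈ range (k + 1), (Nat.choose (N - j) (k - j) : S) * c j * z ^ (k - j) * x ^ j

variable {N d k : ℕ} {c : ℕ → S} {z x : S}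

theorem binomialSum_eq_zero_of_lt (hc : ∀ j < d, c j = 0) (hkd : k < d) :
    binomialSum N c z x k = 0 :=
  sum_eq_zero fun j hj => by rw [hc j (by grind)]; ring

theorem binomialSum_eq_sum_shift (hc : ∀ j < d, c j = 0) (hdk : d ≤ k) :
    binomialSum N c z x k = ∑ m ∈ range (k - d + 1),
      (Nat.choose (N - (d + m)) (k - (d + m)) : S) * c (d + m) * z ^ (k - (d + m)) *
        x ^ (d + m) := by
  rw [binomialSum, show k + 1 = d + (k - d + 1) by omega, sum_range_add,
    sum_eq_zero fun j hj => by rw [hc j (mem_range.1 hj)]; ring, zero_add]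

theorem binomialSum_shift_rescale [Algebra ℚ S] {A B i : ℕ} {y : S} {c' : ℕ → S}
    (hiA : i ≤ A) (hiB : i ≤ B) (hc'₀ : ∀ j < d, c' j = 0)
    (hc' : ∀ j, d ≤ j → j < i →
      c' j = ((B - j + d).choose (i - j) / (A - j).choose (i - j) : ℚ) • (y ^ d * c (j - d)))
    (hdk : d ≤ k) (hki : k < i) :
    binomialSum A c' z x k = ((B - k + d).choose (i - k) / (A - k).choose (i - k) : ℚ) •
      (x ^ d * y ^ d * binomialSum B c z x (k - d)) := by
  rw [binomialSum_eq_sum_shift hc'₀ hdk, binomialSum, mul_sum, smul_sum]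
  refine sum_congr rfl fun m hm => ?_
  have hmk : d + m ≤ k := by grind
  have key := congrArg (algebraMap ℚ S) <| choose_mul_div_choose_eq (K := ℚ)
    (n := A - (d + m)) (N := B - m) (r := i - (d + m)) (s := k - (d + m)) (by omega) (by omega)
  rw [show B - m - (k - (d + m)) = B - k + d by omega,
    show i - (d + m) - (k - (d + m)) = i - k by omega,
    show A - (d + m) - (k - (d + m)) = A - k by omega] at key
  rw [hc' (d + m) (by omega) (by omega), show B - (d + m) + d = B - m by omega,
    show d + m - d = m by omega, show k - d - m = k - (d + m) by omega]
  simp only [map_mul, map_natCast, Algebra.smul_def] at key ⊢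
  linear_combination (y ^ d * c m * z ^ (k - (d + m)) * x ^ (d + m)) * key

end BinomialSum

theorem shift_rescale_coefficients_general {S : Type*} [CommRing S] [Algebra ℚ S]
    (p : ℕ) (hp : p.Prime) (d i L M : ℕ) (hLM : L ≤ M)
    (hiL : i ≤ p ^ L)
    (x y z : S) (a : ℕ → S)
    (hcond : ∀ h, h < i →
      (∑ m ∈ Finset.range (h + 1),
        (Nat.choose (p ^ L - m) (h - m) : S) * a m * z ^ (h - m) * x ^ m) ∈
        Ideal.span {y ^ h})
    (atil : ℕ → S)
    (hatil1 : ∀ j, j < d → atil j = 0)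
    (hatil2 : ∀ j, d ≤ j → j ≤ i - 1 →
      atil j = ((Nat.choose (p ^ L - j + d) (i - j) : ℚ) /
        (Nat.choose (p ^ M - j) (i - j) : ℚ)) • (y ^ d * a (j - d))) :
    ∀ k, k < i →
      (∑ j ∈ Finset.range (k + 1),
        (Nat.choose (p ^ M - j) (k - j) : S) * atil j * z ^ (k - j) * x ^ j) ∈
        Ideal.span {y ^ k} := by
  intro k hki
  change binomialSum (p ^ M) atil z x k ∈ _
  rcases lt_or_ge k d with hkd | hdk
  · rw [binomialSum_eq_zero_of_lt hatil1 hkd]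
    exact zero_mem _
  have hiM : i ≤ p ^ M := hiL.trans (Nat.pow_le_pow_right hp.pos hLM)
  have hyk : y ^ k = y ^ d * y ^ (k - d) := by rw [← pow_add, Nat.add_sub_cancel' hdk]
  rw [binomialSum_shift_rescale hiM hiL hatil1 (fun j hdj hji => hatil2 j hdj (by omega)) hdk hki,
    Algebra.smul_def, Ideal.mem_span_singleton, hyk]
  have hsum : y ^ (k - d) ∣ binomialSum (p ^ L) a z x (k - d) :=
    Ideal.mem_span_singleton.1 (hcond (k - d) (by omega))
  exact dvd_mul_of_dvd_right (mul_dvd_mul (dvd_mul_left _ _) hsum) _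

/-- Lemma 2.6. Shifting and rescaling coefficients: with
`ãⱼ = y^d·C(p^L-j+d, i-j)·a_(j-d)/C(p^M-j, i-j)` for `d ≤ j ≤ i-1` and `ãⱼ = 0` for
`j < d`, the sums `Σⱼ C(p^M-j, k-j) ãⱼ z^(k-j) xʲ` lie in `yᵏS` for all `k < i`. -/
theorem shift_rescale_coefficients {S : Type*} [CommRing S] [IsDomain S] [Algebra ℚ S]
    (p : ℕ) (hp : p.Prime) (d i L M : ℕ) (hLM : L ≤ M)
    (hd : 0 < d) (hdi : d < i) (hiL : i ≤ p ^ L)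
    (x y z : S) (a : ℕ → S)
    (hcond : ∀ h, h < i →
      (∑ m ∈ Finset.range (h + 1),
        (Nat.choose (p ^ L - m) (h - m) : S) * a m * z ^ (h - m) * x ^ m) ∈
        Ideal.span {y ^ h})
    (atil : ℕ → S)
    (hatil1 : ∀ j, j < d → atil j = 0)
    (hatil2 : ∀ j, d ≤ j → j ≤ i - 1 →
      atil j = ((Nat.choose (p ^ L - j + d) (i - j) : ℚ) /
        (Nat.choose (p ^ M - j) (i - j) : ℚ)) • (y ^ d * a (j - d))) :
    ∀ k, k < i →
      (∑ j ∈ Finset.range (k + 1),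
        (Nat.choose (p ^ M - j) (k - j) : S) * atil j * z ^ (k - j) * x ^ j) ∈
        Ideal.span {y ^ k} :=
  shift_rescale_coefficients_general p hp d i L M hLM hiL x y z a hcond atil hatil1 hatil2
end
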